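/- (Variance bound in the proof of Theorem 2.) Suppose the minorization condition holds with constant β ∈ (0,1), i.e. p_i(x, A) ≥ β Π(A) for all i ≥ 1, all x ∈ E and all measurable A. Let h : E → ℝ be a bounded measurable function and let (x_n)_{n≥0} be the time-inhomogeneous Markov chain with initial distribution μ₀ and transitions p_i. Then there is a constant C (depending only on β and sup|h|) such that Var(S_n / n) ≤ C / n for all n ≥ 1, where S_n = Σ_{i=1}^n h(x_i). -/

import Mathlib

open MeasureTheory ProbabilityTheory Set
open scoped ENNReal

/-!
Under the minorization `p j x ≥ β • Π`, every transition kernel shrinks the oscillation of a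
bounded function by the factor `1 - β`: the common part `β • Π` of `p j x` and `p j y` cancels.
By the Markov property the joint law of `(xᵢ, xᵢ₊ₖ)` is `law(xᵢ) ⊗ₘ (pᵢ₊ₖ ∘ ⋯ ∘ pᵢ₊₁)`, so
`Cov(h(xᵢ), h(xᵢ₊ₖ))` is the covariance of `h` and of its `k`-step transport under `law(xᵢ)`,
hence at most `(2 hmax)² (1 - β)ᵏ`. Summing these geometrically decaying correlations over
`1 ≤ i, j ≤ n` gives `Var(Sₙ) ≤ 8 hmax² n / β`.
-/

section

variable {α β : Type*} [MeasurableSpace α] [MeasurableSpace β] {ν : Measure α} {f : α → ℝ}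
  {a b : ℝ}

lemma integral_mem_Icc_of_forall_mem_Icc [IsFiniteMeasure ν] (hf : AEMeasurable f ν)
    (hab : ∀ x, f x ∈ Icc a b) : ∫ x, f x ∂ν ∈ Icc (ν.real univ * a) (ν.real univ * b) := by
  have hfi : Integrable f ν := .of_mem_Icc a b hf (.of_forall hab)
  constructor
  · simpa [integral_const, smul_eq_mul] using
      integral_mono (integrable_const a) hfi fun x ↦ (hab x).1
  · simpa [integral_const, smul_eq_mul] using
      integral_mono hfi (integrable_const b) fun x ↦ (hab x).2

lemma memLp_of_forall_mem_Icc [IsFiniteMeasure ν] (hf : AEMeasurable f ν)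
    (hab : ∀ x, f x ∈ Icc a b) (q : ℝ≥0∞) : MemLp f q ν :=
  .of_bound hf.aestronglyMeasurable (max |a| |b|)
    (.of_forall fun x ↦ abs_le_max_abs_abs (hab x).1 (hab x).2)

lemma ProbabilityTheory.Kernel.exists_integral_mem_Icc_of_le (κ : Kernel α β) [IsMarkovKernel κ]
    {ρ : Measure β} [IsFiniteMeasure ρ] (hρ : ∀ x, ρ ≤ κ x) {g : β → ℝ} (hg : Measurable g)
    {D : ℝ} (hgD : ∀ y, g y ∈ Icc a (a + D)) :
    ∃ a', ∀ x, ∫ y, g y ∂κ x ∈ Icc a' (a' + (1 - ρ.real univ) * D) := by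
  refine ⟨∫ y, g y ∂ρ + (1 - ρ.real univ) * a, fun x ↦ ?_⟩
  have hmass : (κ x - ρ).real univ = 1 - ρ.real univ := by
    rw [measureReal_def, Measure.sub_apply .univ (hρ x), ENNReal.toReal_sub_of_le
      ((hρ x) univ) (measure_ne_top _ _), measure_univ, ENNReal.toReal_one, measureReal_def]
  have hgi : ∀ ν : Measure β, IsFiniteMeasure ν → Integrable g ν := fun ν _ ↦
    .of_mem_Icc a (a + D) hg.aemeasurable (.of_forall hgD)
  have hsplit : ∫ y, g y ∂κ x = ∫ y, g y ∂ρ + ∫ y, g y ∂(κ x - ρ) := by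
    conv_lhs => rw [← Measure.sub_add_cancel_of_le (hρ x)]
    rw [integral_add_measure (hgi _ inferInstance) (hgi _ inferInstance), add_comm]
  have hrest := integral_mem_Icc_of_forall_mem_Icc (ν := κ x - ρ) hg.aemeasurable hgD
  rw [hmass] at hrest
  rw [hsplit]
  constructor <;> linarith [hrest.1, hrest.2]

lemma abs_covariance_le_of_forall_mem_Icc [IsProbabilityMeasure ν] {X Y : α → ℝ} {s t : ℝ}
    (hX : AEMeasurable X ν) (hY : AEMeasurable Y ν)
    (hXs : ∀ x, X x ∈ Icc a (a + s)) (hYt : ∀ x, Y x ∈ Icc b (b + t)) :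
    |cov[X, Y; ν]| ≤ s * t := by
  have hEX := integral_mem_Icc_of_forall_mem_Icc hX hXs
  have hEY := integral_mem_Icc_of_forall_mem_Icc hY hYt
  simp only [probReal_univ, one_mul] at hEX hEY
  have hbound : ∀ x, ‖(X x - ν[X]) * (Y x - ν[Y])‖ ≤ s * t := fun x ↦ by
    rw [Real.norm_eq_abs, abs_mul]
    have h1 : |X x - ν[X]| ≤ s :=
      abs_sub_le_iff.2 ⟨by linarith [(hXs x).2, hEX.1], by linarith [(hXs x).1, hEX.2]⟩
    have h2 : |Y x - ν[Y]| ≤ t :=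
      abs_sub_le_iff.2 ⟨by linarith [(hYt x).2, hEY.1], by linarith [(hYt x).1, hEY.2]⟩
    exact mul_le_mul h1 h2 (abs_nonneg _) ((abs_nonneg _).trans h1)
  simpa [covariance] using norm_integral_le_of_norm_le_const (μ := ν) (.of_forall hbound)

lemma covariance_fst_snd_compProd [IsProbabilityMeasure ν] {κ : Kernel α β} [IsMarkovKernel κ]
    {u : α → ℝ} {v : β → ℝ} (hu : Measurable u) (hv : Measurable v) {c d : ℝ}
    (hab : ∀ x, u x ∈ Icc a b) (hcd : ∀ y, v y ∈ Icc c d) :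
    cov[fun z ↦ u z.1, fun z ↦ v z.2; ν ⊗ₘ κ] = cov[u, fun x ↦ ∫ y, v y ∂κ x; ν] := by
  have hu2 : MemLp (fun z : α × β ↦ u z.1) 2 (ν ⊗ₘ κ) :=
    memLp_of_forall_mem_Icc (hu.comp measurable_fst).aemeasurable (fun z ↦ hab z.1) 2
  have hv2 : MemLp (fun z : α × β ↦ v z.2) 2 (ν ⊗ₘ κ) :=
    memLp_of_forall_mem_Icc (hv.comp measurable_snd).aemeasurable (fun z ↦ hcd z.2) 2
  have hvκ : ∀ x, Integrable v (κ x) := fun x ↦ .of_mem_Icc c d hv.aemeasurable (.of_forall hcd)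
  have hmean_u : ∫ z, u z.1 ∂(ν ⊗ₘ κ) = ∫ x, u x ∂ν := by
    rw [Measure.integral_compProd (hu2.integrable one_le_two)]
    simp
  have hprod : ∀ e₁ e₂ : ℝ, Integrable (fun z : α × β ↦ (u z.1 - e₁) * (v z.2 - e₂)) (ν ⊗ₘ κ) :=
    fun e₁ e₂ ↦ (hu2.sub (memLp_const e₁)).integrable_mul (hv2.sub (memLp_const e₂))
  rw [covariance, covariance, Measure.integral_compProd (hprod _ _),
    Measure.integral_compProd (hv2.integrable one_le_two), hmean_u]
  congr with x
  simp only
  rw [integral_const_mul, integral_sub (hvκ x) (integrable_const _)]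
  simp

end

lemma sum_pow_le_inv_one_sub_of_injOn {ι : Type*} {γ : ℝ} (hγ₀ : 0 ≤ γ) (hγ₁ : γ < 1)
    {s : Finset ι} {g : ι → ℕ} (hg : InjOn g s) : ∑ j ∈ s, γ ^ g j ≤ (1 - γ)⁻¹ := by
  rw [← Finset.sum_image hg, ← tsum_geometric_of_lt_one hγ₀ hγ₁]
  exact (summable_geometric_of_lt_one hγ₀ hγ₁).sum_le_tsum _ fun _ _ ↦ pow_nonneg hγ₀ _

lemma sum_pow_dist_le {γ : ℝ} (hγ₀ : 0 ≤ γ) (hγ₁ : γ < 1) (s : Finset ℕ) (i : ℕ) :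
    ∑ j ∈ s, γ ^ Nat.dist i j ≤ 2 * (1 - γ)⁻¹ := by
  rw [← Finset.sum_filter_add_sum_filter_not s (· ≤ i), two_mul]
  exact add_le_add
    (sum_pow_le_inv_one_sub_of_injOn hγ₀ hγ₁ fun x hx y hy hxy ↦ by
      simp only [Finset.coe_filter, mem_ofPred_eq, Nat.dist] at hx hy hxy; omega)
    (sum_pow_le_inv_one_sub_of_injOn hγ₀ hγ₁ fun x hx y hy hxy ↦ by
      simp only [Finset.coe_filter, mem_ofPred_eq, Nat.dist] at hx hy hxy; omega)

lemma variance_sum_le_of_abs_covariance_le {Ω : Type*} [MeasurableSpace Ω] {μ : Measure Ω}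
    [IsFiniteMeasure μ] {X : ℕ → Ω → ℝ} (hX : ∀ i, MemLp (X i) 2 μ) {c γ : ℝ} (hc : 0 ≤ c)
    (hγ₀ : 0 ≤ γ) (hγ₁ : γ < 1) (hcov : ∀ i k, |cov[X i, X (i + k); μ]| ≤ c * γ ^ k)
    (s : Finset ℕ) :
    Var[fun ω ↦ ∑ i ∈ s, X i ω; μ] ≤ s.card * (2 * c * (1 - γ)⁻¹) := by
  have hcov_dist : ∀ i j, cov[X i, X j; μ] ≤ c * γ ^ Nat.dist i j := by
    intro i j
    rcases le_total i j with hij | hji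
    · rw [Nat.dist_eq_sub_of_le hij]
      simpa [Nat.add_sub_cancel' hij] using (le_abs_self _).trans (hcov i (j - i))
    · rw [Nat.dist_eq_sub_of_le_right hji, covariance_comm]
      simpa [Nat.add_sub_cancel' hji] using (le_abs_self _).trans (hcov j (i - j))
  rw [variance_fun_sum' fun i _ ↦ hX i]
  calc ∑ i ∈ s, ∑ j ∈ s, cov[X i, X j; μ]
      ≤ ∑ i ∈ s, c * ∑ j ∈ s, γ ^ Nat.dist i j := by
        simp_rw [Finset.mul_sum]
        exact Finset.sum_le_sum fun i _ ↦ Finset.sum_le_sum fun j _ ↦ hcov_dist i j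
    _ ≤ ∑ i ∈ s, c * (2 * (1 - γ)⁻¹) := by
        gcongr with i
        exact sum_pow_dist_le hγ₀ hγ₁ s i
    _ = s.card * (2 * c * (1 - γ)⁻¹) := by
        rw [Finset.sum_const, nsmul_eq_mul]
        ring

section MarkovChain

variable {E : Type*} [MeasurableSpace E] (p : ℕ → Kernel E E)

/-- `transitionKernel p i k = p (i + k) ∘ₖ ⋯ ∘ₖ p (i + 1)`, the law of `x (i + k)` given `x i`. -/
noncomputable def transitionKernel (i : ℕ) : ℕ → Kernel E E
  | 0 => Kernel.id
  | k + 1 => p (i + k + 1) ∘ₖ transitionKernel i k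

def HasMarkovProperty (μ : Measure (ℕ → E)) : Prop :=
  ∀ n : ℕ, ∀ g : (ℕ → E) → ℝ, Measurable g → (∀ ω, |g ω| ≤ 1) →
    (∀ ω ω' : ℕ → E, (∀ i ≤ n, ω i = ω' i) → g ω = g ω') →
    ∀ A : Set E, MeasurableSet A →
      ∫ ω, g ω * Set.indicator A (fun _ => (1 : ℝ)) (ω (n + 1)) ∂μ
        = ∫ ω, g ω * (p (n + 1) (ω n) A).toReal ∂μ

variable [∀ j, IsMarkovKernel (p j)]

instance (i k : ℕ) : IsMarkovKernel (transitionKernel p i k) := by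
  induction k with
  | zero => exact inferInstanceAs (IsMarkovKernel Kernel.id)
  | succ k ih => exact inferInstanceAs (IsMarkovKernel (p (i + k + 1) ∘ₖ transitionKernel p i k))

lemma exists_integral_transitionKernel_mem_Icc {ρ : Measure E} [IsFiniteMeasure ρ]
    (hρ : ∀ j ≥ 1, ∀ x, ρ ≤ p j x) (i k : ℕ) {f : E → ℝ} (hf : Measurable f) {a D : ℝ}
    (hfD : ∀ y, f y ∈ Icc a (a + D)) :
    ∃ a', ∀ x, ∫ y, f y ∂transitionKernel p i k x ∈
      Icc a' (a' + (1 - ρ.real univ) ^ k * D) := by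
  induction k generalizing f a D with
  | zero =>
    refine ⟨a, fun x ↦ ?_⟩
    simpa [transitionKernel, Kernel.id_apply, integral_dirac' _ _ hf.stronglyMeasurable] using hfD x
  | succ k ih =>
    obtain ⟨b, hb⟩ := (p (i + k + 1)).exists_integral_mem_Icc_of_le (hρ _ (by omega)) hf hfD
    obtain ⟨a', ha'⟩ := ih hf.stronglyMeasurable.integral_kernel.measurable hb
    refine ⟨a', fun x ↦ ?_⟩
    rw [transitionKernel, Kernel.integral_comp (.of_mem_Icc a (a + D) hf.aemeasurable
      (.of_forall hfD)), pow_succ, mul_assoc]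
    exact ha' x

variable {p} {μ : Measure (ℕ → E)}

/-- Testing the Markov property against `g = S.indicator 1` says that both sides agree on every
measurable set. -/
lemma HasMarkovProperty.map_restrict_succ [IsFiniteMeasure μ] (hM : HasMarkovProperty p μ) {n : ℕ}
    {S : Set (ℕ → E)} (hS : MeasurableSet S)
    (hSn : ∀ ω ω' : ℕ → E, (∀ i ≤ n, ω i = ω' i) → (ω ∈ S ↔ ω' ∈ S)) :
    (μ.restrict S).map (· (n + 1)) = p (n + 1) ∘ₘ (μ.restrict S).map (· n) := by
  ext A hA
  rw [Measure.map_apply (measurable_pi_apply _) hA, Measure.bind_apply hA (Kernel.aemeasurable _),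
    lintegral_map (Kernel.measurable_coe _ hA) (measurable_pi_apply _)]
  have key := hM n (S.indicator 1) (measurable_one.indicator hS)
    (fun ω ↦ by by_cases h : ω ∈ S <;> simp [h])
    (fun ω ω' h ↦ by by_cases hω : ω ∈ S <;> simp [hω, ← hSn ω ω' h]) A hA
  have hrestrict : ∀ F : (ℕ → E) → ℝ, ∫ ω, S.indicator 1 ω * F ω ∂μ = ∫ ω in S, F ω ∂μ :=
    fun F ↦ by
      rw [← integral_indicator hS]
      congr with ω
      by_cases hω : ω ∈ S <;> simp [hω]
  have hpre : ∀ ω : ℕ → E, A.indicator (fun _ ↦ (1 : ℝ)) (ω (n + 1)) =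
      ((· (n + 1)) ⁻¹' A).indicator 1 ω := fun _ ↦ rfl
  simp_rw [hrestrict, hpre] at key
  rw [integral_indicator_one (measurable_pi_apply _ hA),
    integral_toReal (μ := μ.restrict S) (f := fun ω : ℕ → E ↦ p (n + 1) (ω n) A)
      ((Kernel.measurable_coe _ hA).comp (measurable_pi_apply n)).aemeasurable
      (.of_forall fun _ ↦ measure_lt_top _ _)] at key
  refine (ENNReal.toReal_eq_toReal_iff' (measure_ne_top _ _) ?_).1 key
  exact ((lintegral_mono fun ω ↦ prob_le_one).trans_lt (by simp)).ne

lemma HasMarkovProperty.map_restrict_add [IsFiniteMeasure μ] (hM : HasMarkovProperty p μ) {i : ℕ}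
    {S : Set (ℕ → E)} (hS : MeasurableSet S)
    (hSi : ∀ ω ω' : ℕ → E, (∀ j ≤ i, ω j = ω' j) → (ω ∈ S ↔ ω' ∈ S)) (k : ℕ) :
    (μ.restrict S).map (· (i + k)) = transitionKernel p i k ∘ₘ (μ.restrict S).map (· i) := by
  induction k with
  | zero => simp [transitionKernel]
  | succ k ih =>
    rw [← add_assoc, hM.map_restrict_succ hS fun ω ω' h ↦ hSi ω ω' fun j hj ↦ h j (by omega), ih,
      Measure.comp_assoc]
    rfl

lemma HasMarkovProperty.map_pair [IsFiniteMeasure μ] (hM : HasMarkovProperty p μ) (i k : ℕ) :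
    μ.map (fun ω ↦ (ω i, ω (i + k))) = μ.map (· i) ⊗ₘ transitionKernel p i k := by
  refine Measure.ext_prod fun {A B} hA hB ↦ ?_
  have hS : MeasurableSet ((· i) ⁻¹' A : Set (ℕ → E)) := measurable_pi_apply i hA
  rw [Measure.map_apply (by fun_prop) (hA.prod hB), Measure.compProd_apply_prod hA hB,
    Measure.restrict_map (measurable_pi_apply i) hA,
    ← Measure.bind_apply hB (Kernel.aemeasurable _),
    ← hM.map_restrict_add hS (fun ω ω' h ↦ by simp [h i le_rfl]) k,
    Measure.map_apply (measurable_pi_apply _) hB, Measure.restrict_apply (measurable_pi_apply _ hB),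
    inter_comm]
  rfl

lemma HasMarkovProperty.abs_covariance_le [IsProbabilityMeasure μ] (hM : HasMarkovProperty p μ)
    {ρ : Measure E} [IsFiniteMeasure ρ] (hρ : ∀ j ≥ 1, ∀ x, ρ ≤ p j x) {f : E → ℝ}
    (hf : Measurable f) {a D : ℝ} (hfD : ∀ y, f y ∈ Icc a (a + D)) (i k : ℕ) :
    |cov[fun ω ↦ f (ω i), fun ω ↦ f (ω (i + k)); μ]| ≤ D * ((1 - ρ.real univ) ^ k * D) := by
  have := Measure.isProbabilityMeasure_map (μ := μ) (measurable_pi_apply i).aemeasurable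
  rw [← covariance_map_fun (X := fun z : E × E ↦ f z.1) (Y := fun z ↦ f z.2)
    (Z := fun ω : ℕ → E ↦ (ω i, ω (i + k))) (hf.comp measurable_fst).aestronglyMeasurable
    (hf.comp measurable_snd).aestronglyMeasurable (by fun_prop), hM.map_pair i k,
    covariance_fst_snd_compProd hf hf hfD hfD]
  obtain ⟨a', ha'⟩ := exists_integral_transitionKernel_mem_Icc p hρ i k hf hfD
  exact abs_covariance_le_of_forall_mem_Icc hf.aemeasurable
    hf.stronglyMeasurable.integral_kernel.measurable.aemeasurable hfD ha'

end MarkovChain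

theorem variance_bound_of_minorization_general
    (β hmax : ℝ) (hβ0 : 0 < β) (hβ1 : β < 1) :
    ∃ C : ℝ, ∀ (E : Type) [MeasurableSpace E]
      (Pi : Measure E) [IsProbabilityMeasure Pi]
      (p : ℕ → Kernel E E) [∀ i, IsMarkovKernel (p i)],
      (∀ i ≥ 1, ∀ A : Set E, MeasurableSet A → ∫⁻ x, p i x A ∂Pi = Pi A) →
      (∀ i ≥ 1, ∀ x : E, ∀ A : Set E, MeasurableSet A →
        ENNReal.ofReal β * Pi A ≤ p i x A) →
      ∀ (h : E → ℝ), Measurable h → (∀ x, |h x| ≤ hmax) →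
      ∀ (μ₀ : Measure E), IsProbabilityMeasure μ₀ →
      -- `μ` is the law of the chain on the canonical path space (Ionescu–Tulcea):
      ∀ (μ : Measure (ℕ → E)), IsProbabilityMeasure μ →
      μ.map (fun ω => ω 0) = μ₀ →
      -- the Markov property: conditionally on the past up to time `n`, the state at
      -- time `n+1` is drawn from `p (n+1) (ω n)`:
      (∀ n : ℕ, ∀ g : (ℕ → E) → ℝ, Measurable g → (∀ ω, |g ω| ≤ 1) →
        (∀ ω ω' : ℕ → E, (∀ i ≤ n, ω i = ω' i) → g ω = g ω') →
        ∀ A : Set E, MeasurableSet A →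
          ∫ ω, g ω * Set.indicator A (fun _ => (1 : ℝ)) (ω (n + 1)) ∂μ
            = ∫ ω, g ω * (p (n + 1) (ω n) A).toReal ∂μ) →
      ∀ n : ℕ, 1 ≤ n →
        variance (fun ω => (∑ i ∈ Finset.Icc 1 n, h (ω i)) / n) μ ≤ C / n := by
  refine ⟨8 * hmax ^ 2 / β, ?_⟩
  intro E _ Pi _ p _ _ hmino h hh hb μ₀ _ μ _ _ hM n hn
  set ρ : Measure E := ENNReal.ofReal β • Pi
  have hρ : ∀ j ≥ 1, ∀ x, ρ ≤ p j x := fun j hj x ↦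
    Measure.le_iff.2 fun A hA ↦ hmino j hj x A hA
  have : IsFiniteMeasure ρ := ⟨by simp [ρ]⟩
  have hρ_univ : ρ.real univ = β := by simp [ρ, hβ0.le]
  have hh_Icc : ∀ x, h x ∈ Icc (-hmax) (-hmax + 2 * hmax) := fun x ↦ by
    have := abs_le.1 (hb x); constructor <;> linarith
  have hcov : ∀ i k, |cov[fun ω ↦ h (ω i), fun ω ↦ h (ω (i + k)); μ]|
      ≤ (2 * hmax) ^ 2 * (1 - β) ^ k := fun i k ↦ by
    have := HasMarkovProperty.abs_covariance_le hM hρ hh hh_Icc i k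
    rw [hρ_univ] at this
    linarith
  have hvar := variance_sum_le_of_abs_covariance_le (X := fun i (ω : ℕ → E) ↦ h (ω i))
    (fun i ↦ memLp_of_forall_mem_Icc (hh.comp (measurable_pi_apply i)).aemeasurable
      (fun (ω : ℕ → E) ↦ hh_Icc (ω i)) 2)
    (sq_nonneg _) (by linarith) (by linarith) hcov (Finset.Icc 1 n)
  simp only [Nat.card_Icc, add_tsub_cancel_right, sub_sub_cancel] at hvar
  simp_rw [div_eq_mul_inv _ (n : ℝ), variance_mul_const]
  have hn' : (0 : ℝ) < n := by exact_mod_cast hn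
  calc _ ≤ n * (2 * (2 * hmax) ^ 2 * β⁻¹) * (n : ℝ)⁻¹ ^ 2 := by gcongr
    _ = 8 * hmax ^ 2 / β / n := by field_simp; ring

/-- **Variance bound in the proof of Theorem 2.** Under the minorization
condition with constant `β ∈ (0,1)`, for `h` bounded by `hmax` there is a constant `C`
depending only on `β` and `hmax` such that for the time-inhomogeneous chain `(xₙ)`
(realized by a measure `μ` on the path space, with initial distribution `μ₀` and
transitions `pᵢ`), `Var(Sₙ/n) ≤ C/n` for all `n ≥ 1`, where `Sₙ = ∑_{i=1}^n h(xᵢ)`. -/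
theorem variance_bound_of_minorization
    (β hmax : ℝ) (hβ0 : 0 < β) (hβ1 : β < 1) (hmax0 : 0 ≤ hmax) :
    ∃ C : ℝ, ∀ (E : Type) [MeasurableSpace E]
      (Pi : Measure E) [IsProbabilityMeasure Pi]
      (p : ℕ → Kernel E E) [∀ i, IsMarkovKernel (p i)],
      (∀ i ≥ 1, ∀ A : Set E, MeasurableSet A → ∫⁻ x, p i x A ∂Pi = Pi A) →
      (∀ i ≥ 1, ∀ x : E, ∀ A : Set E, MeasurableSet A →
        ENNReal.ofReal β * Pi A ≤ p i x A) →
      ∀ (h : E → ℝ), Measurable h → (∀ x, |h x| ≤ hmax) →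
      ∀ (μ₀ : Measure E), IsProbabilityMeasure μ₀ →
      -- `μ` is the law of the chain on the canonical path space (Ionescu–Tulcea):
      ∀ (μ : Measure (ℕ → E)), IsProbabilityMeasure μ →
      μ.map (fun ω => ω 0) = μ₀ →
      -- the Markov property: conditionally on the past up to time `n`, the state at
      -- time `n+1` is drawn from `p (n+1) (ω n)`:
      (∀ n : ℕ, ∀ g : (ℕ → E) → ℝ, Measurable g → (∀ ω, |g ω| ≤ 1) →
        (∀ ω ω' : ℕ → E, (∀ i ≤ n, ω i = ω' i) → g ω = g ω') →
        ∀ A : Set E, MeasurableSet A →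
          ∫ ω, g ω * Set.indicator A (fun _ => (1 : ℝ)) (ω (n + 1)) ∂μ
            = ∫ ω, g ω * (p (n + 1) (ω n) A).toReal ∂μ) →
      ∀ n : ℕ, 1 ≤ n →
        variance (fun ω => (∑ i ∈ Finset.Icc 1 n, h (ω i)) / n) μ ≤ C / n :=
  variance_bound_of_minorization_general β hmax hβ0 hβ1
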